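/- arXiv:1407.6233 — 3 statements merged into one kernel-verified Lean document; each statement's English description precedes it below -/
import Mathlib

section
/- For all nonnegative real numbers x, y and a > 0, α₀ > 0, one has x² + a y² + α₀ √(x² + a y²) · y ≤ (x + c y)² where c = max{α₀/2, √(a + α₀ √a)}. -/
/-- algebraic core: `x² + a y² + α₀ √(x²+a y²) y ≤ (x + c y)²`
with `c = max{α₀/2, √(a + α₀ √a)}`. -/
theorem algebraic_core (x y a α₀ : ℝ) (hx : 0 ≤ x) (hy : 0 ≤ y)
    (ha : 0 < a) (hα₀ : 0 < α₀) :
    x ^ 2 + a * y ^ 2 + α₀ * Real.sqrt (x ^ 2 + a * y ^ 2) * y ≤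
      (x + max (α₀ / 2) (Real.sqrt (a + α₀ * Real.sqrt a)) * y) ^ 2 := by
  set s := Real.sqrt a with hsdef
  have hs0 : 0 ≤ s := Real.sqrt_nonneg a
  have hs : s ^ 2 = a := Real.sq_sqrt ha.le
  set c := max (α₀ / 2) (Real.sqrt (a + α₀ * s)) with hcdef
  have hc1 : α₀ / 2 ≤ c := le_max_left _ _
  have hc2 : a + α₀ * s ≤ c ^ 2 := by
    have h1 : Real.sqrt (a + α₀ * s) ≤ c := le_max_right _ _
    have h2 : (Real.sqrt (a + α₀ * s)) ^ 2 = a + α₀ * s :=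
      Real.sq_sqrt (by positivity)
    nlinarith [Real.sqrt_nonneg (a + α₀ * s)]
  have hsqrt : Real.sqrt (x ^ 2 + a * y ^ 2) ≤ x + s * y := by
    have h1 : x ^ 2 + a * y ^ 2 ≤ (x + s * y) ^ 2 := by nlinarith [mul_nonneg (mul_nonneg hs0 hx) hy]
    calc Real.sqrt (x ^ 2 + a * y ^ 2) ≤ Real.sqrt ((x + s * y) ^ 2) :=
          Real.sqrt_le_sqrt h1
      _ = x + s * y := Real.sqrt_sq (by positivity)
  have hx2 : 0 ≤ Real.sqrt (x ^ 2 + a * y ^ 2) := Real.sqrt_nonneg _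
  nlinarith [mul_nonneg hx hy, mul_nonneg hy hy,
    mul_le_mul_of_nonneg_right hsqrt (mul_nonneg hα₀.le hy)]
end

section
/- Let β, γ ≥ 0, α ≥ 0, S' > 0 with β < S'. Then the function g(x) = βx + S'(1-x) + αγ x √(βx + S'(1-x)) is concave on [0,1]. -/
open Set

/-- concavity of `g(x) = βx + S'(1-x) + αγ x √(βx + S'(1-x))` on `[0,1]`
when `β < S'`. -/
theorem g_concave (β γ α S' : ℝ) (hβ : 0 ≤ β) (hγ : 0 ≤ γ) (hα : 0 ≤ α)
    (hS' : 0 < S') (hβS : β < S') :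
    ConcaveOn ℝ (Icc (0 : ℝ) 1)
      (fun x => β * x + S' * (1 - x) + α * γ * x * Real.sqrt (β * x + S' * (1 - x))) := by
  have hd : 0 < S' - β := sub_pos.2 hβS
  set c := α * γ with hc
  have hc0 : 0 ≤ c := mul_nonneg hα hγ
  set k := c / (S' - β) with hk
  have hk0 : 0 ≤ k := div_nonneg hc0 hd.le
  have hL : ∀ x ∈ Icc (0:ℝ) 1, 0 ≤ β * x + S' * (1 - x) := by
    intro x hx
    obtain ⟨h0, h1⟩ := hx
    nlinarith
  -- affine identity
  have hLaff : ∀ x y a b : ℝ, a + b = 1 →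
      β * (a * x + b * y) + S' * (1 - (a * x + b * y)) =
      a * (β * x + S' * (1 - x)) + b * (β * y + S' * (1 - y)) := by
    intro x y a b hab
    linear_combination -S' * hab
  -- sqrt ∘ L concave
  have h1 : ConcaveOn ℝ (Icc (0:ℝ) 1)
      (fun x => Real.sqrt (β * x + S' * (1 - x))) := by
    refine ⟨convex_Icc 0 1, ?_⟩
    intro x hx y hy a b ha hb hab
    have := Real.strictConcaveOn_sqrt.concaveOn.2 (hL x hx) (hL y hy) ha hb hab
    simp only [smul_eq_mul] at this ⊢
    rw [hLaff x y a b hab]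
    exact this
  -- L^(3/2) convex
  have h2 : ConvexOn ℝ (Icc (0:ℝ) 1)
      (fun x => (β * x + S' * (1 - x)) ^ ((3:ℝ)/2)) := by
    refine ⟨convex_Icc 0 1, ?_⟩
    intro x hx y hy a b ha hb hab
    have := (convexOn_rpow (by norm_num : (1:ℝ) ≤ 3/2)).2 (hL x hx) (hL y hy) ha hb hab
    simp only [smul_eq_mul] at this ⊢
    rw [hLaff x y a b hab]
    exact this
  -- affine part concave
  have h0 : ConcaveOn ℝ (Icc (0:ℝ) 1) (fun x => β * x + S' * (1 - x)) := by
    refine ⟨convex_Icc 0 1, ?_⟩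
    intro x hx y hy a b ha hb hab
    simp only [smul_eq_mul]
    rw [hLaff x y a b hab]
  -- sum
  have hsum : ConcaveOn ℝ (Icc (0:ℝ) 1)
      (fun x => (β * x + S' * (1 - x)) + ((k * S') * Real.sqrt (β * x + S' * (1 - x))
        + (-k) * ((β * x + S' * (1 - x)) ^ ((3:ℝ)/2)))) := by
    refine h0.add (ConcaveOn.add ?_ ?_)
    · have := h1.smul (mul_nonneg hk0 hS'.le)
      simpa [smul_eq_mul] using this
    · have h2' := (h2.smul hk0).neg
      refine h2'.congr ?_
      intro x _
      simp only [Pi.neg_apply, Pi.smul_apply, smul_eq_mul]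
      ring
  refine hsum.congr ?_
  intro x hx
  have hLx := hL x hx
  have hrpow : (β * x + S' * (1 - x)) ^ ((3:ℝ)/2)
      = (β * x + S' * (1 - x)) * Real.sqrt (β * x + S' * (1 - x)) := by
    rw [Real.sqrt_eq_rpow, ← Real.rpow_one_add' hLx (by norm_num)]
    norm_num
  have hkc : k * (S' - β) = c := by
    rw [hk, div_mul_cancel₀ _ hd.ne']
  simp only
  rw [hrpow]
  linear_combination (Real.sqrt (β * x + S' * (1 - x)) * x) * hkc
end

section
/- Let β, γ ≥ 0, α ≥ 0, S' > 0, and define f(x) = β x^{(N-2)/N} + S'(1-x)^{(N-2)/N} + αγ x^{(N-1)/N} √(β x^{(N-2)/N} + S'(1-x)^{(N-2)/N}) on [0,1]. If min_{[0,1]} f < S' = f(0), then the minimum of f over [0,1] is attained at x = 1, i.e. min f = f(1) = β + αγ√β. -/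
open Set

lemma self_le_rpow_aux {x e : ℝ} (hx0 : 0 ≤ x) (hx1 : x ≤ 1) (he0 : 0 < e) (he1 : e ≤ 1) :
    x ≤ x ^ e := by
  rcases eq_or_lt_of_le hx0 with h | h
  · simp [← h, Real.zero_rpow he0.ne']
  · calc x = x ^ (1 : ℝ) := (Real.rpow_one x).symm
      _ ≤ x ^ e := Real.rpow_le_rpow_of_exponent_ge h hx1 he1

/-- if `min f < S' = f 0`, the minimum of `f` on `[0,1]` is at `x = 1`. -/
theorem min_at_one (N : ℕ) (hN : 5 ≤ N) (β γ α S' : ℝ) (hβ : 0 ≤ β) (hγ : 0 ≤ γ)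
    (hα : 0 ≤ α) (hS' : 0 < S')
    (f : ℝ → ℝ)
    (hf : ∀ x, f x = β * x ^ (((N : ℝ) - 2) / N) + S' * (1 - x) ^ (((N : ℝ) - 2) / N) +
      α * γ * x ^ (((N : ℝ) - 1) / N) *
        Real.sqrt (β * x ^ (((N : ℝ) - 2) / N) + S' * (1 - x) ^ (((N : ℝ) - 2) / N)))
    (hmin : ∃ x ∈ Icc (0 : ℝ) 1, f x < S') :
    (∀ x ∈ Icc (0 : ℝ) 1, f 1 ≤ f x) ∧ f 1 = β + α * γ * Real.sqrt β := by
  have hN5 : (5 : ℝ) ≤ (N : ℝ) := by exact_mod_cast hN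
  have hNpos : (0 : ℝ) < N := by linarith
  have ha0 : 0 < ((N : ℝ) - 2) / N := div_pos (by linarith) hNpos
  have ha1 : ((N : ℝ) - 2) / N ≤ 1 := by rw [div_le_one hNpos]; linarith
  have hb0 : 0 < ((N : ℝ) - 1) / N := div_pos (by linarith) hNpos
  have hb1 : ((N : ℝ) - 1) / N ≤ 1 := by rw [div_le_one hNpos]; linarith
  -- value at 1
  have hf1 : f 1 = β + α * γ * Real.sqrt β := by
    have h0 : (1 : ℝ) - 1 = 0 := by ring
    rw [hf 1, h0, Real.zero_rpow ha0.ne']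
    simp
  -- the lower bound f x ≥ x β + (1-x) S' + αγ x √(x β + (1-x) S')
  have key : ∀ x ∈ Icc (0 : ℝ) 1,
      x * β + (1 - x) * S' + α * γ * (x * Real.sqrt (x * β + (1 - x) * S')) ≤ f x := by
    rintro x ⟨hx0, hx1⟩
    rw [hf x]
    have h1 : x ≤ x ^ (((N : ℝ) - 2) / N) := self_le_rpow_aux hx0 hx1 ha0 ha1
    have h2 : (1 - x) ≤ (1 - x) ^ (((N : ℝ) - 2) / N) :=
      self_le_rpow_aux (by linarith) (by linarith) ha0 ha1
    have h3 : x ≤ x ^ (((N : ℝ) - 1) / N) := self_le_rpow_aux hx0 hx1 hb0 hb1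
    have hu : x * β + (1 - x) * S' ≤
        β * x ^ (((N : ℝ) - 2) / N) + S' * (1 - x) ^ (((N : ℝ) - 2) / N) := by
      nlinarith [mul_le_mul_of_nonneg_left h1 hβ, mul_le_mul_of_nonneg_left h2 hS'.le]
    have hsq : Real.sqrt (x * β + (1 - x) * S') ≤
        Real.sqrt (β * x ^ (((N : ℝ) - 2) / N) + S' * (1 - x) ^ (((N : ℝ) - 2) / N)) :=
      Real.sqrt_le_sqrt hu
    have hterm : x * Real.sqrt (x * β + (1 - x) * S') ≤
        x ^ (((N : ℝ) - 1) / N) *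
          Real.sqrt (β * x ^ (((N : ℝ) - 2) / N) + S' * (1 - x) ^ (((N : ℝ) - 2) / N)) :=
      mul_le_mul h3 hsq (Real.sqrt_nonneg _) (le_trans hx0 h3)
    have hterm' := mul_le_mul_of_nonneg_left hterm (mul_nonneg hα hγ)
    nlinarith [hterm', hu]
  -- β < S'
  have hβS : β < S' := by
    by_contra h
    push_neg at h
    obtain ⟨x₀, hx₀, hlt⟩ := hmin
    have hk := key x₀ hx₀
    obtain ⟨hx0, hx1⟩ := hx₀
    have hnn : 0 ≤ α * γ * (x₀ * Real.sqrt (x₀ * β + (1 - x₀) * S')) :=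
      mul_nonneg (mul_nonneg hα hγ) (mul_nonneg hx0 (Real.sqrt_nonneg _))
    nlinarith [mul_le_mul_of_nonneg_left h hx0]
  -- refined bound : f x ≥ (1-x) S' + x f 1
  have key2 : ∀ x ∈ Icc (0 : ℝ) 1,
      (1 - x) * S' + x * (β + α * γ * Real.sqrt β) ≤ f x := by
    rintro x hx
    have hk := key x hx
    obtain ⟨hx0, hx1⟩ := hx
    have hℓ : β ≤ x * β + (1 - x) * S' := by nlinarith
    have hsβ : Real.sqrt β ≤ Real.sqrt (x * β + (1 - x) * S') := Real.sqrt_le_sqrt hℓ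
    have h4 : α * γ * (x * Real.sqrt β) ≤
        α * γ * (x * Real.sqrt (x * β + (1 - x) * S')) :=
      mul_le_mul_of_nonneg_left (mul_le_mul_of_nonneg_left hsβ hx0) (mul_nonneg hα hγ)
    nlinarith
  -- f 1 < S'
  have hf1S : f 1 < S' := by
    by_contra h
    push_neg at h
    obtain ⟨x₀, hx₀, hlt⟩ := hmin
    have hk := key2 x₀ hx₀
    obtain ⟨hx0, hx1⟩ := hx₀
    rw [hf1] at h
    nlinarith
  refine ⟨fun x hx => ?_, hf1⟩
  have hk := key2 x hx
  obtain ⟨hx0, hx1⟩ := hx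
  rw [hf1] at hf1S ⊢
  nlinarith
end
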